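/- Let α_1, α_2 > 0 with S = α_1 + α_2, and let f(p) = p^{α_1−1}(1−p)^{α_2−1}/B(α_1, α_2) be the Beta(α_1, α_2) density on (0,1), where B(α_1,α_2) = Γ(α_1)Γ(α_2)/Γ(S). Define h = −∫_0^1 f(p) log f(p) dp, H = −(α_1/S) log(α_1/S) − (α_2/S) log(α_2/S), and 𝔥 = −∫_0^1 p f(p) log(p f(p)) dp − ∫_0^1 (1−p) f(p) log((1−p) f(p)) dp. Then the mutual information I = h + H − 𝔥 equals (S − 2)Ψ(S) − (α_1 − 1)Ψ(α_1) − (α_2 − 1)Ψ(α_2) − (α_1/S) log(α_1/S) − (α_2/S) log(α_2/S) + (α_2 − 1)(α_1/S)[Ψ(α_2) − Ψ(S + 1)] + (α_1 − 1)(α_2/S)[Ψ(α_1) − Ψ(S + 1)] + (α_1²/S)[Ψ(α_1 + 1) − Ψ(S + 1)] + (α_2²/S)[Ψ(α_2 + 1) − Ψ(S + 1)]. -/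

import Mathlib

/-!
Expanding the logarithms, every integral in `h` and `𝔥` is a linear combination of the Beta
integral `∫₀¹ x^(a-1) (1-x)^(b-1) dx = B(a, b)` and of its log-moments against `log x` and
`log (1 - x)`, for `(a, b)` one of `(α₁, α₂)`, `(α₁ + 1, α₂)`, `(α₁, α₂ + 1)`: multiplying the
density by `p` or `1 - p` shifts one parameter. The log-moment against `log x` is the derivative
of `a ↦ B(a, b) = Γ(a)Γ(b)/Γ(a+b)`, that is `B(a, b) (Ψ(a) - Ψ(a + b))`, by differentiation under
the integral sign; the one against `log (1 - x)` follows by the reflection `x ↦ 1 - x`. Finally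
`Γ(a + 1) = a Γ(a)` expresses the shifted Beta values through `B(α₁, α₂)`, and the terms in
`log B` cancel.
-/

open MeasureTheory Real

/-- The digamma function `Ψ = Γ'/Γ`. -/
noncomputable def digamma (x : ℝ) : ℝ := deriv Real.Gamma x / Real.Gamma x

open Set ProbabilityTheory

lemma rpow_mul_abs_log_le_rpow_sub_div {x s c : ℝ} (hx : 0 < x) (hx1 : x ≤ 1) (hc : 0 < c) :
    x ^ s * |log x| ≤ x ^ (s - c) / c := by
  have h := log_le_rpow_div (inv_nonneg.2 hx.le) hc
  rw [log_inv, inv_rpow hx.le] at h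
  rw [abs_of_nonpos (log_nonpos hx.le hx1), rpow_sub hx]
  calc x ^ s * -log x ≤ x ^ s * ((x ^ c)⁻¹ / c) := by gcongr
    _ = x ^ s / x ^ c / c := by ring

lemma ofReal_cpow_mul_one_sub_cpow {a b x : ℝ} (hx : x ∈ Icc 0 1) :
    (x : ℂ) ^ ((a : ℂ) - 1) * (1 - (x : ℂ)) ^ ((b : ℂ) - 1)
      = ((x ^ (a - 1) * (1 - x) ^ (b - 1) : ℝ) : ℂ) := by
  rw [Complex.ofReal_mul, Complex.ofReal_cpow hx.1, Complex.ofReal_cpow (sub_nonneg.2 hx.2)]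
  push_cast
  rfl

lemma integrableOn_rpow_mul_one_sub_rpow {a b : ℝ} (ha : 0 < a) (hb : 0 < b) :
    IntegrableOn (fun x : ℝ => x ^ (a - 1) * (1 - x) ^ (b - 1)) (Ioo 0 1) := by
  have h := (Complex.betaIntegral_convergent (u := a) (v := b) (by simpa) (by simpa)).1
  refine (integrable_congr ?_).1 ((h.mono_set Ioo_subset_Ioc_self).re)
  filter_upwards [ae_restrict_mem measurableSet_Ioo] with x hx
  rw [ofReal_cpow_mul_one_sub_cpow (Ioo_subset_Icc_self hx)]
  exact Complex.ofReal_re _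

lemma integral_rpow_mul_one_sub_rpow {a b : ℝ} (ha : 0 < a) (hb : 0 < b) :
    ∫ x in Ioo (0 : ℝ) 1, x ^ (a - 1) * (1 - x) ^ (b - 1) = beta a b := by
  rw [beta_eq_betaIntegralReal a b ha hb, Complex.betaIntegral,
    intervalIntegral.integral_of_le zero_le_one, ← integral_Ioc_eq_integral_Ioo,
    setIntegral_congr_fun measurableSet_Ioc
      fun x hx => ofReal_cpow_mul_one_sub_cpow (Ioc_subset_Icc_self hx),
    integral_complex_ofReal, Complex.ofReal_re]

lemma measurePreserving_one_sub_Ioo :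
    MeasurePreserving (fun x : ℝ => 1 - x) (volume.restrict (Ioo 0 1))
      (volume.restrict (Ioo 0 1)) := by
  simpa only [preimage_const_sub_Ioo, sub_self, sub_zero] using
    (Measure.measurePreserving_sub_left volume (1 : ℝ)).restrict_preimage_emb
      (Homeomorph.subLeft (1 : ℝ)).measurableEmbedding (Ioo 0 1)

lemma integrableOn_Ioo_comp_one_sub_iff {E : Type*} [NormedAddCommGroup E] {g : ℝ → E} :
    IntegrableOn (fun x => g (1 - x)) (Ioo 0 1) ↔ IntegrableOn g (Ioo 0 1) :=
  measurePreserving_one_sub_Ioo.integrable_comp_emb (Homeomorph.subLeft (1 : ℝ)).measurableEmbedding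

lemma setIntegral_Ioo_comp_one_sub {E : Type*} [NormedAddCommGroup E] [NormedSpace ℝ E]
    (g : ℝ → E) : ∫ x in Ioo (0 : ℝ) 1, g (1 - x) = ∫ x in Ioo (0 : ℝ) 1, g x :=
  measurePreserving_one_sub_Ioo.integral_comp (Homeomorph.subLeft (1 : ℝ)).measurableEmbedding g

lemma beta_comm (a b : ℝ) : beta b a = beta a b := by
  rw [ProbabilityTheory.beta, ProbabilityTheory.beta, mul_comm, add_comm]

lemma beta_add_one_left {a b : ℝ} (ha : a ≠ 0) (hab : a + b ≠ 0) :
    beta (a + 1) b = a / (a + b) * beta a b := by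
  rw [ProbabilityTheory.beta, ProbabilityTheory.beta, add_right_comm, Gamma_add_one ha,
    Gamma_add_one hab]
  field_simp

lemma beta_add_one_right {a b : ℝ} (hb : b ≠ 0) (hab : a + b ≠ 0) :
    beta a (b + 1) = b / (a + b) * beta a b := by
  rw [← beta_comm, beta_add_one_left hb (by rwa [add_comm]), beta_comm, add_comm b]

lemma hasDerivAt_beta_left {a b : ℝ} (ha : 0 < a) (hab : 0 < a + b) :
    HasDerivAt (fun t => beta t b) (beta a b * (digamma a - digamma (a + b))) a := by
  have hΓ {x : ℝ} (hx : 0 < x) : HasDerivAt Gamma (deriv Gamma x) x :=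
    (differentiableAt_Gamma fun m => (neg_nonpos.2 m.cast_nonneg).trans_lt hx |>.ne').hasDerivAt
  have hΓshift : HasDerivAt (fun t => Gamma (t + b)) (deriv Gamma (a + b)) a :=
    (hΓ hab).comp_add_const a b
  refine (((hΓ ha).mul_const (Gamma b)).div hΓshift (Gamma_pos_of_pos hab).ne').congr_deriv ?_
  have := (Gamma_pos_of_pos ha).ne'
  have := (Gamma_pos_of_pos hab).ne'
  simp only [ProbabilityTheory.beta, digamma]
  field_simp

lemma hasDerivAt_integral_rpow_mul_one_sub_rpow {a b : ℝ} (ha : 0 < a) (hb : 0 < b) :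
    IntegrableOn (fun x : ℝ => x ^ (a - 1) * (1 - x) ^ (b - 1) * log x) (Ioo 0 1) ∧
    HasDerivAt (fun t => ∫ x in Ioo (0 : ℝ) 1, x ^ (t - 1) * (1 - x) ^ (b - 1))
      (∫ x in Ioo (0 : ℝ) 1, x ^ (a - 1) * (1 - x) ^ (b - 1) * log x) a := by
  refine hasDerivAt_integral_of_dominated_loc_of_deriv_le (μ := volume.restrict (Ioo 0 1))
    (F := fun t x => x ^ (t - 1) * (1 - x) ^ (b - 1))
    (F' := fun t x => x ^ (t - 1) * (1 - x) ^ (b - 1) * log x)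
    (bound := fun x => 4 / a * (x ^ (a / 4 - 1) * (1 - x) ^ (b - 1)))
    (Metric.ball_mem_nhds a (half_pos ha))
    (Filter.Eventually.of_forall fun t => (by fun_prop : Measurable _).aestronglyMeasurable)
    (integrableOn_rpow_mul_one_sub_rpow ha hb) (by fun_prop : Measurable _).aestronglyMeasurable
    ?_ ((integrableOn_rpow_mul_one_sub_rpow (by positivity) hb).const_mul _) ?_
  · filter_upwards [ae_restrict_mem measurableSet_Ioo] with x ⟨hx0, hx1⟩ t ht
    have hta : a / 2 - 1 ≤ t - 1 := by
      have := (abs_lt.1 (Metric.mem_ball.1 ht)).1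
      linarith
    have h1x : 0 < 1 - x := sub_pos.2 hx1
    rw [norm_mul, norm_mul, norm_of_nonneg (rpow_nonneg hx0.le _),
      norm_of_nonneg (rpow_nonneg h1x.le _), norm_eq_abs]
    calc x ^ (t - 1) * (1 - x) ^ (b - 1) * |log x|
        ≤ x ^ (a / 2 - 1) * |log x| * (1 - x) ^ (b - 1) := by
          rw [mul_right_comm]
          gcongr ?_ * _ * _
          exact rpow_le_rpow_of_exponent_ge hx0 hx1.le hta
      _ ≤ x ^ (a / 2 - 1 - a / 4) / (a / 4) * (1 - x) ^ (b - 1) := by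
          gcongr
          exact rpow_mul_abs_log_le_rpow_sub_div hx0 hx1.le (by positivity)
      _ = 4 / a * (x ^ (a / 4 - 1) * (1 - x) ^ (b - 1)) := by
          rw [show a / 2 - 1 - a / 4 = a / 4 - 1 by ring]
          field_simp
  · filter_upwards [ae_restrict_mem measurableSet_Ioo] with x hx t _
    have h := ((hasStrictDerivAt_const_rpow hx.1 (t - 1)).hasDerivAt.comp t
      ((hasDerivAt_id t).sub_const 1)).mul_const ((1 - x) ^ (b - 1))
    exact h.congr_deriv (by ring)

lemma integrableOn_rpow_mul_one_sub_rpow_mul_log {a b : ℝ} (ha : 0 < a) (hb : 0 < b) :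
    IntegrableOn (fun x : ℝ => x ^ (a - 1) * (1 - x) ^ (b - 1) * log x) (Ioo 0 1) :=
  (hasDerivAt_integral_rpow_mul_one_sub_rpow ha hb).1

lemma integral_rpow_mul_one_sub_rpow_mul_log {a b : ℝ} (ha : 0 < a) (hb : 0 < b) :
    ∫ x in Ioo (0 : ℝ) 1, x ^ (a - 1) * (1 - x) ^ (b - 1) * log x
      = beta a b * (digamma a - digamma (a + b)) := by
  have hJ : (fun t => ∫ x in Ioo (0 : ℝ) 1, x ^ (t - 1) * (1 - x) ^ (b - 1))
      =ᶠ[nhds a] fun t => beta t b := by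
    filter_upwards [Ioi_mem_nhds ha] with t ht using integral_rpow_mul_one_sub_rpow ht hb
  exact (hasDerivAt_integral_rpow_mul_one_sub_rpow ha hb).2.unique
    ((hasDerivAt_beta_left ha (add_pos ha hb)).congr_of_eventuallyEq hJ)

lemma integrableOn_rpow_mul_one_sub_rpow_mul_log_one_sub {a b : ℝ} (ha : 0 < a) (hb : 0 < b) :
    IntegrableOn (fun x : ℝ => x ^ (a - 1) * (1 - x) ^ (b - 1) * log (1 - x)) (Ioo 0 1) := by
  have h := integrableOn_Ioo_comp_one_sub_iff.2 (integrableOn_rpow_mul_one_sub_rpow_mul_log hb ha)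
  simp only [sub_sub_cancel] at h
  exact h.congr_fun (fun x _ => by ring) measurableSet_Ioo

lemma integral_rpow_mul_one_sub_rpow_mul_log_one_sub {a b : ℝ} (ha : 0 < a) (hb : 0 < b) :
    ∫ x in Ioo (0 : ℝ) 1, x ^ (a - 1) * (1 - x) ^ (b - 1) * log (1 - x)
      = beta a b * (digamma b - digamma (a + b)) := by
  have h := setIntegral_Ioo_comp_one_sub fun y => y ^ (b - 1) * (1 - y) ^ (a - 1) * log y
  simp only [sub_sub_cancel, integral_rpow_mul_one_sub_rpow_mul_log hb ha] at h
  rw [← beta_comm, add_comm a, ← h]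
  exact setIntegral_congr_fun measurableSet_Ioo fun x _ => by ring

lemma integral_mul_log_of_eqOn_rpow_mul_one_sub_rpow_div {a b B : ℝ} (ha : 0 < a) (hb : 0 < b)
    (hB : 0 < B) {g : ℝ → ℝ}
    (hg : EqOn g (fun x => x ^ (a - 1) * (1 - x) ^ (b - 1) / B) (Ioo 0 1)) :
    ∫ x in Ioo (0 : ℝ) 1, g x * log (g x) = beta a b / B * ((a - 1) * (digamma a - digamma (a + b))
      + (b - 1) * (digamma b - digamma (a + b)) - log B) := by
  have hsplit : EqOn (fun x => g x * log (g x))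
      (fun x => (a - 1) / B * (x ^ (a - 1) * (1 - x) ^ (b - 1) * log x)
        + (b - 1) / B * (x ^ (a - 1) * (1 - x) ^ (b - 1) * log (1 - x))
        - log B / B * (x ^ (a - 1) * (1 - x) ^ (b - 1))) (Ioo 0 1) := by
    intro x ⟨hx0, hx1⟩
    have h1x : 0 < 1 - x := sub_pos.2 hx1
    simp only [hg ⟨hx0, hx1⟩]
    rw [log_div (by positivity) hB.ne', log_mul (by positivity) (by positivity),
      log_rpow hx0, log_rpow h1x]
    ring
  rw [setIntegral_congr_fun measurableSet_Ioo hsplit, integral_sub, integral_add,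
    integral_const_mul, integral_const_mul, integral_const_mul,
    integral_rpow_mul_one_sub_rpow_mul_log ha hb,
    integral_rpow_mul_one_sub_rpow_mul_log_one_sub ha hb, integral_rpow_mul_one_sub_rpow ha hb]
  · ring
  · exact (integrableOn_rpow_mul_one_sub_rpow_mul_log ha hb).const_mul _
  · exact (integrableOn_rpow_mul_one_sub_rpow_mul_log_one_sub ha hb).const_mul _
  · exact ((integrableOn_rpow_mul_one_sub_rpow_mul_log ha hb).const_mul _).add
      ((integrableOn_rpow_mul_one_sub_rpow_mul_log_one_sub ha hb).const_mul _)
  · exact (integrableOn_rpow_mul_one_sub_rpow ha hb).const_mul _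

theorem analytic_mutual_information_beta
    (α₁ α₂ : ℝ) (hα₁ : 0 < α₁) (hα₂ : 0 < α₂)
    (S : ℝ) (hS : S = α₁ + α₂)
    (B : ℝ) (hB : B = Real.Gamma α₁ * Real.Gamma α₂ / Real.Gamma S)
    (f : ℝ → ℝ) (hf : ∀ p, f p = p ^ (α₁ - 1) * (1 - p) ^ (α₂ - 1) / B)
    (h H 𝔥 I : ℝ)
    (hh : h = -∫ p in Set.Ioo (0 : ℝ) 1, f p * Real.log (f p))
    (hH : H = -(α₁ / S) * Real.log (α₁ / S) - (α₂ / S) * Real.log (α₂ / S))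
    (hJ : 𝔥 = (-∫ p in Set.Ioo (0 : ℝ) 1, p * f p * Real.log (p * f p))
        - ∫ p in Set.Ioo (0 : ℝ) 1, (1 - p) * f p * Real.log ((1 - p) * f p))
    (hI : I = h + H - 𝔥) :
    I = (S - 2) * digamma S - (α₁ - 1) * digamma α₁ - (α₂ - 1) * digamma α₂
      - (α₁ / S) * Real.log (α₁ / S) - (α₂ / S) * Real.log (α₂ / S)
      + (α₂ - 1) * (α₁ / S) * (digamma α₂ - digamma (S + 1))
      + (α₁ - 1) * (α₂ / S) * (digamma α₁ - digamma (S + 1))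
      + (α₁ ^ 2 / S) * (digamma (α₁ + 1) - digamma (S + 1))
      + (α₂ ^ 2 / S) * (digamma (α₂ + 1) - digamma (S + 1)) := by
  replace hB : B = beta α₁ α₂ := by rw [hB, hS]; rfl
  have hB0 : 0 < B := hB ▸ beta_pos hα₁ hα₂
  have hf_ent := integral_mul_log_of_eqOn_rpow_mul_one_sub_rpow_div hα₁ hα₂ hB0 fun p _ => hf p
  have hpf_ent : ∫ p in Ioo (0 : ℝ) 1, p * f p * log (p * f p) = _ :=
    integral_mul_log_of_eqOn_rpow_mul_one_sub_rpow_div (a := α₁ + 1) (by positivity) hα₂ hB0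
      fun p hp => by
        have hp0 := hp.1.ne'
        simp only [hf, add_sub_cancel_right, rpow_sub_one hp0]
        field_simp
  have hqf_ent : ∫ p in Ioo (0 : ℝ) 1, (1 - p) * f p * log ((1 - p) * f p) = _ :=
    integral_mul_log_of_eqOn_rpow_mul_one_sub_rpow_div (b := α₂ + 1) hα₁ (by positivity) hB0
      fun p hp => by
        have hp1 := (sub_pos.2 hp.2).ne'
        simp only [hf, add_sub_cancel_right, rpow_sub_one hp1]
        field_simp
  rw [hI, hh, hH, hJ, hf_ent, hpf_ent, hqf_ent, beta_add_one_left hα₁.ne' (by positivity),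
    beta_add_one_right hα₂.ne' (by positivity), ← hB, add_right_comm α₁ 1, ← add_assoc]
  subst hS
  field_simp
  ring
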